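/- arXiv:2212.06386 — 8 statements merged into one kernel-verified Lean document; each statement's English description precedes it below -/
import Mathlib

section
/- Let (Ω, P) be a probability space and X, ΔX, Y, ΔY integrable real random variables such that the random pair (X, ΔX) is independent of the random pair (Y, ΔY), and such that X·Y, Y·ΔX, and X·ΔY are integrable. Then E[X·Y] = E[X]·E[Y] and E[Y·ΔX + X·ΔY] = E[Y]·E[ΔX] + E[X]·E[ΔY]. In particular, if (X, ΔX) is an unbiased dual-number estimator of (x, δx) and (Y, ΔY) is an independent unbiased dual-number estimator of (y, δy), then (X·Y, Y·ΔX + X·ΔY) is an unbiased dual-number estimator of (x·y, y·δx + x·δy). -/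
open MeasureTheory ProbabilityTheory

theorem times_estimator_dual_unbiased_general {Ω : Type*} [MeasurableSpace Ω]
    (P : Measure Ω) [IsProbabilityMeasure P]
    (X ΔX Y ΔY : Ω → ℝ)
    (hX : Integrable X P) (hΔX : Integrable ΔX P)
    (hY : Integrable Y P) (hΔY : Integrable ΔY P)
    (hindep : IndepFun (fun ω => (X ω, ΔX ω)) (fun ω => (Y ω, ΔY ω)) P) :
    (∫ ω, X ω * Y ω ∂P = (∫ ω, X ω ∂P) * ∫ ω, Y ω ∂P) ∧
      ∫ ω, (Y ω * ΔX ω + X ω * ΔY ω) ∂P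
        = (∫ ω, Y ω ∂P) * (∫ ω, ΔX ω ∂P) + (∫ ω, X ω ∂P) * (∫ ω, ΔY ω ∂P) := by
  have hindep_X_Y : IndepFun X Y P := hindep.comp measurable_fst measurable_fst
  have hindep_Y_ΔX : IndepFun Y ΔX P := (hindep.comp measurable_snd measurable_fst).symm
  have hindep_X_ΔY : IndepFun X ΔY P := hindep.comp measurable_fst measurable_snd
  refine ⟨hindep_X_Y.integral_fun_mul_eq_mul_integral hX.1 hY.1, ?_⟩
  have hYΔX : Integrable (fun ω => Y ω * ΔX ω) P := hindep_Y_ΔX.integrable_mul hY hΔX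
  have hXΔY : Integrable (fun ω => X ω * ΔY ω) P := hindep_X_ΔY.integrable_mul hX hΔY
  rw [integral_add hYΔX hXΔY, hindep_Y_ΔX.integral_fun_mul_eq_mul_integral hY.1 hΔX.1,
    hindep_X_ΔY.integral_fun_mul_eq_mul_integral hX.1 hΔY.1]

/-- **Correctness of the dual-number derivative of the product-of-estimators primitive.**
If the random pair `(X, ΔX)` is independent of the random pair `(Y, ΔY)`, all four
variables are integrable, and the products `X·Y`, `Y·ΔX`, `X·ΔY` are integrable, then
`E[X·Y] = E[X]·E[Y]` and `E[Y·ΔX + X·ΔY] = E[Y]·E[ΔX] + E[X]·E[ΔY]`.  In particular, if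
`(X, ΔX)` estimates the dual number `(x, δx)` and `(Y, ΔY)` independently estimates
`(y, δy)`, then `(X·Y, Y·ΔX + X·ΔY)` estimates `(x·y, y·δx + x·δy)`. -/
theorem times_estimator_dual_unbiased {Ω : Type*} [MeasurableSpace Ω]
    (P : Measure Ω) [IsProbabilityMeasure P]
    (X ΔX Y ΔY : Ω → ℝ)
    (hX : Integrable X P) (hΔX : Integrable ΔX P)
    (hY : Integrable Y P) (hΔY : Integrable ΔY P)
    (hXY : Integrable (fun ω => X ω * Y ω) P)
    (hYΔX : Integrable (fun ω => Y ω * ΔX ω) P)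
    (hXΔY : Integrable (fun ω => X ω * ΔY ω) P)
    (hindep : IndepFun (fun ω => (X ω, ΔX ω)) (fun ω => (Y ω, ΔY ω)) P) :
    (∫ ω, X ω * Y ω ∂P = (∫ ω, X ω ∂P) * ∫ ω, Y ω ∂P) ∧
      ∫ ω, (Y ω * ΔX ω + X ω * ΔY ω) ∂P
        = (∫ ω, Y ω ∂P) * (∫ ω, ΔX ω ∂P) + (∫ ω, X ω ∂P) * (∫ ω, ΔY ω ∂P) :=
  times_estimator_dual_unbiased_general P X ΔX Y ΔY hX hΔX hY hΔY hindep
end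

section
/- Let λ > 0 and let μ be a probability measure on ℝ such that the identity function is integrable with mean m̄ = ∫ x dμ(x). Then the series ∑_{n=0}^∞ (exp(−λ)·λⁿ/n!) · ∫_{(Fin n) → ℝ} (∏_{i : Fin n} (x i)/λ) d(⊗_{i : Fin n} μ) converges, and exp(λ) times its sum equals exp(m̄). That is, the estimator that samples N ∼ Poisson(λ), then samples N i.i.d. values x₁,…,x_N ∼ μ, and returns exp(λ)·∏_{i=1}^N (x_i/λ), is an unbiased estimator of exp(∫ x dμ(x)). -/
open MeasureTheory

/-! Since the coordinates are i.i.d., the `n`-fold integral factorises into `(m̄ / λ) ^ n`; the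
Poisson weights then cancel the powers of `λ`, leaving `exp (-λ)` times the exponential series
of `m̄`. -/

theorem integral_pi_prod_div_eq_pow {ι : Type*} [Fintype ι] (μ : Measure ℝ) [SigmaFinite μ]
    (c : ℝ) :
    ∫ x : ι → ℝ, ∏ i, x i / c ∂(Measure.pi fun _ => μ) = ((∫ x, x ∂μ) / c) ^ Fintype.card ι := by
  rw [integral_fintype_prod_eq_pow (fun x : ℝ => x / c), integral_div]

theorem hasSum_poisson_weight_mul_div_pow {lam : ℝ} (hlam : lam ≠ 0) (m : ℝ) :
    HasSum (fun n : ℕ => Real.exp (-lam) * lam ^ n / n.factorial * (m / lam) ^ n)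
      (Real.exp (m - lam)) := by
  have h := (NormedSpace.expSeries_div_hasSum_exp m).mul_left (Real.exp (-lam))
  rw [← Real.exp_eq_exp_ℝ, ← Real.exp_add, neg_add_eq_sub] at h
  refine h.congr_fun fun n => ?_
  rw [div_pow]
  field_simp

theorem exp_estimator_unbiased_general (lam : ℝ) (hlam : 0 < lam)
    (μ : Measure ℝ) [IsProbabilityMeasure μ]
    (mbar : ℝ) (hmean : mbar = ∫ x, x ∂μ) :
    Summable (fun n : ℕ => Real.exp (-lam) * lam ^ n / n.factorial *
        ∫ x : Fin n → ℝ, ∏ i, x i / lam ∂(Measure.pi fun _ : Fin n => μ)) ∧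
      Real.exp lam * (∑' n : ℕ, Real.exp (-lam) * lam ^ n / n.factorial *
          ∫ x : Fin n → ℝ, ∏ i, x i / lam ∂(Measure.pi fun _ : Fin n => μ))
        = Real.exp mbar := by
  have hsum : HasSum (fun n : ℕ => Real.exp (-lam) * lam ^ n / n.factorial *
      ∫ x : Fin n → ℝ, ∏ i, x i / lam ∂(Measure.pi fun _ : Fin n => μ))
      (Real.exp (mbar - lam)) := by
    simpa only [integral_pi_prod_div_eq_pow, Fintype.card_fin, ← hmean]
      using hasSum_poisson_weight_mul_div_pow hlam.ne' mbar
  refine ⟨hsum.summable, ?_⟩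
  rw [hsum.tsum_eq, ← Real.exp_add, add_sub_cancel]

/-- **Correctness of the `exp^{R̃}` primitive.**
Let `λ > 0` and let `μ` be a probability measure on `ℝ` whose identity function is
integrable with mean `mbar`.  The Poisson-randomized product estimator, which samples
`N ∼ Poisson(λ)`, then `N` i.i.d. values `x₁,…,x_N ∼ μ` and returns
`exp(λ)·∏ᵢ (xᵢ/λ)`, is an unbiased estimator of `exp(mbar)`: the defining series
converges and `exp(λ)` times its sum equals `exp(mbar)`. -/
theorem exp_estimator_unbiased (lam : ℝ) (hlam : 0 < lam)
    (μ : Measure ℝ) [IsProbabilityMeasure μ]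
    (hint : Integrable (fun x => x) μ) (mbar : ℝ) (hmean : mbar = ∫ x, x ∂μ) :
    Summable (fun n : ℕ => Real.exp (-lam) * lam ^ n / n.factorial *
        ∫ x : Fin n → ℝ, ∏ i, x i / lam ∂(Measure.pi fun _ : Fin n => μ)) ∧
      Real.exp lam * (∑' n : ℕ, Real.exp (-lam) * lam ^ n / n.factorial *
          ∫ x : Fin n → ℝ, ∏ i, x i / lam ∂(Measure.pi fun _ : Fin n => μ))
        = Real.exp mbar :=
  exp_estimator_unbiased_general lam hlam μ mbar hmean
end

section
/- Let θ₀ ∈ ℝ, let h : ℝ → ℝ satisfy HasDerivAt h h' θ₀ with 0 < h(θ₀) < 1, and let g : ℝ → Bool → ℝ be such that for each b ∈ Bool the map θ ↦ g θ b has derivative g'(b) at θ₀. For each b ∈ Bool let ν_b be a probability measure on ℝ × ℝ whose coordinate projections π₁ and π₂ are integrable, with ∫ π₁ dν_b = g θ₀ b and ∫ π₂ dν_b = g'(b). Then the function L(θ) = h(θ)·g θ true + (1 − h(θ))·g θ false is differentiable at θ₀, and its derivative equals h(θ₀)·∫ (δy + y·(h'/h(θ₀))) dν_true(y, δy) + (1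 − h(θ₀))·∫ (δy − y·(h'/(1 − h(θ₀)))) dν_false(y, δy). That is, the REINFORCE dual-number expectation estimator for a Bernoulli coin flip is unbiased: sampling b ∼ Bernoulli(h(θ₀)), then (y, δy) ∼ ν_b, and returning δy + y·(d/dθ log Bern(b; h(θ))|_{θ₀}) gives an unbiased estimate of L'(θ₀). -/
/-!
The loss is a Bernoulli mixture, so by the product rule its derivative is
`h θ₀ · g' true + (1 - h θ₀) · g' false + h' · (g θ₀ true - g θ₀ false)`.
In the estimator the score `h' / h θ₀` (resp. `-h' / (1 - h θ₀)`) is weighted by the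
probability `h θ₀` (resp. `1 - h θ₀`) of its outcome, so the denominators cancel and,
by linearity and unbiasedness of `ν`, its expectation is the same number.
-/

open MeasureTheory

theorem HasDerivAt.bernoulli_mixture {h u v : ℝ → ℝ} {h' u' v' x : ℝ}
    (hh : HasDerivAt h h' x) (hu : HasDerivAt u u' x) (hv : HasDerivAt v v' x) :
    HasDerivAt (fun θ => h θ * u θ + (1 - h θ) * v θ)
      (h x * u' + (1 - h x) * v' + h' * (u x - v x)) x := by
  refine ((hh.mul hu).add ((hh.const_sub 1).mul hv)).congr_deriv ?_
  ring

theorem integral_snd_add_fst_mul {ν : Measure (ℝ × ℝ)}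
    (hfst : Integrable (fun p : ℝ × ℝ => p.1) ν) (hsnd : Integrable (fun p : ℝ × ℝ => p.2) ν)
    (c : ℝ) :
    ∫ p : ℝ × ℝ, (p.2 + p.1 * c) ∂ν = (∫ p, p.2 ∂ν) + (∫ p, p.1 ∂ν) * c := by
  rw [integral_add hsnd (hfst.mul_const c), integral_mul_const]

theorem integral_snd_sub_fst_mul {ν : Measure (ℝ × ℝ)}
    (hfst : Integrable (fun p : ℝ × ℝ => p.1) ν) (hsnd : Integrable (fun p : ℝ × ℝ => p.2) ν)
    (c : ℝ) :
    ∫ p : ℝ × ℝ, (p.2 - p.1 * c) ∂ν = (∫ p, p.2 ∂ν) - (∫ p, p.1 ∂ν) * c := by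
  rw [integral_sub hsnd (hfst.mul_const c), integral_mul_const]

theorem bernoulli_weighted_score {q : ℝ} (hq0 : q ≠ 0) (hq1 : 1 - q ≠ 0)
    (q' y₁ y₂ δ₁ δ₂ : ℝ) :
    q * (δ₁ + y₁ * (q' / q)) + (1 - q) * (δ₂ - y₂ * (q' / (1 - q)))
      = q * δ₁ + (1 - q) * δ₂ + q' * (y₁ - y₂) := by
  field_simp
  ring

theorem flip_reinforce_correct_general (θ₀ h' : ℝ) (h : ℝ → ℝ)
    (hh : HasDerivAt h h' θ₀) (h0 : 0 < h θ₀) (h1 : h θ₀ < 1)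
    (g : ℝ → Bool → ℝ) (g' : Bool → ℝ)
    (hg : ∀ b, HasDerivAt (fun θ => g θ b) (g' b) θ₀)
    (ν : Bool → Measure (ℝ × ℝ))
    (hint1 : ∀ b, Integrable (fun p : ℝ × ℝ => p.1) (ν b))
    (hint2 : ∀ b, Integrable (fun p : ℝ × ℝ => p.2) (ν b))
    (hmean1 : ∀ b, ∫ p : ℝ × ℝ, p.1 ∂(ν b) = g θ₀ b)
    (hmean2 : ∀ b, ∫ p : ℝ × ℝ, p.2 ∂(ν b) = g' b) :
    HasDerivAt (fun θ => h θ * g θ true + (1 - h θ) * g θ false)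
      (h θ₀ * (∫ p : ℝ × ℝ, (p.2 + p.1 * (h' / h θ₀)) ∂(ν true))
        + (1 - h θ₀) * ∫ p : ℝ × ℝ, (p.2 - p.1 * (h' / (1 - h θ₀))) ∂(ν false)) θ₀ := by
  rw [integral_snd_add_fst_mul (hint1 true) (hint2 true),
    integral_snd_sub_fst_mul (hint1 false) (hint2 false), hmean1, hmean1, hmean2, hmean2,
    bernoulli_weighted_score h0.ne' (sub_ne_zero.mpr h1.ne')]
  exact hh.bernoulli_mixture (hg true) (hg false)

/-- **Lemma 4.1: correctness of the built-in derivative of `flip_REINFORCE`.**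
Let `h` have derivative `h'` at `θ₀` with `0 < h θ₀ < 1`, and for each Boolean `b`
let `θ ↦ g θ b` have derivative `g' b` at `θ₀`.  Let `ν b` be a probability measure
on `ℝ × ℝ` (a dual-number estimator) with integrable coordinates, first-coordinate
mean `g θ₀ b` and second-coordinate mean `g' b`.  Then the loss
`L θ = h θ · g θ true + (1 − h θ) · g θ false` is differentiable at `θ₀`, with
derivative equal to the expectation of the REINFORCE dual-number estimate
`δy + y·(d/dθ log Bern(b; h θ))|_{θ₀}`. -/
theorem flip_reinforce_correct (θ₀ h' : ℝ) (h : ℝ → ℝ)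
    (hh : HasDerivAt h h' θ₀) (h0 : 0 < h θ₀) (h1 : h θ₀ < 1)
    (g : ℝ → Bool → ℝ) (g' : Bool → ℝ)
    (hg : ∀ b, HasDerivAt (fun θ => g θ b) (g' b) θ₀)
    (ν : Bool → Measure (ℝ × ℝ)) [∀ b, IsProbabilityMeasure (ν b)]
    (hint1 : ∀ b, Integrable (fun p : ℝ × ℝ => p.1) (ν b))
    (hint2 : ∀ b, Integrable (fun p : ℝ × ℝ => p.2) (ν b))
    (hmean1 : ∀ b, ∫ p : ℝ × ℝ, p.1 ∂(ν b) = g θ₀ b)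
    (hmean2 : ∀ b, ∫ p : ℝ × ℝ, p.2 ∂(ν b) = g' b) :
    HasDerivAt (fun θ => h θ * g θ true + (1 - h θ) * g θ false)
      (h θ₀ * (∫ p : ℝ × ℝ, (p.2 + p.1 * (h' / h θ₀)) ∂(ν true))
        + (1 - h θ₀) * ∫ p : ℝ × ℝ, (p.2 - p.1 * (h' / (1 - h θ₀))) ∂(ν false)) θ₀ :=
  flip_reinforce_correct_general θ₀ h' h hh h0 h1 g g' hg ν hint1 hint2 hmean1 hmean2
end

section
/- Let μ, σ : ℝ → ℝ with σ(θ) > 0 for all θ, and let f : ℝ → ℝ → ℝ. Define g(θ)(x) = f(θ)(μ(θ) + σ(θ)·x). Assume: (i) for each θ, x ↦ g(θ)(x) is measurable and integrable with respect to gaussianReal 0 1; (ii) for (gaussianReal 0 1)-almost every x, the map θ ↦ g(θ)(x) is differentiable with derivative ∂_θ g(θ)(x); and (iii) ∂_θ g is locally dominated with respect to gaussianReal 0 1. Then the loss L(θ) = ∫ f(θ)(y) d(gaussianReal (μ θ) ((σ θ)²))(y) is differentiable at every θ, with L'(θ) = ∫ ∂_θ g(θ)(x) d(gaussianReal 0 1)(x).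 That is, the reparameterization-trick gradient estimator for Gaussian sampling is unbiased. -/
/-!
Pushing the standard Gaussian forward by `x ↦ μ θ + σ θ * x` turns the loss into
`θ ↦ ∫ g θ x dN(0,1)(x)`, so the claim is differentiation under the integral sign. The domination
of `∂_θ g` is only assumed for each `θ` separately, off a null set depending on `θ`. The
derivative of `g` is jointly measurable (a limit of difference quotients), so Fubini upgrades
this to a bound for almost every `x` at almost every `θ` near `θ₀`; integrating the derivative
then makes `θ ↦ g θ x` Lipschitz near `θ₀` for almost every `x`, which is the hypothesis of
`hasDerivAt_integral_of_dominated_loc_of_lip`.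
-/

open MeasureTheory ProbabilityTheory

def LocallyDominated {X : Type*} [MeasurableSpace X] (ν : Measure X)
    (g : ℝ → X → ℝ) : Prop :=
  ∀ θ₀ : ℝ, ∃ ε > (0 : ℝ), ∃ m : X → ℝ, Integrable m ν ∧ (∀ x, 0 ≤ m x) ∧
    ∀ θ : ℝ, |θ - θ₀| < ε → ∀ᵐ x ∂ν, |g θ x| ≤ m x

open Filter Topology
open scoped NNReal

theorem integral_gaussianReal_eq_integral_affine (f : ℝ → ℝ) (m σ : ℝ) :
    ∫ y, f y ∂gaussianReal m (σ ^ 2).toNNReal = ∫ x, f (m + σ * x) ∂gaussianReal 0 1 := by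
  rcases eq_or_ne σ 0 with rfl | hσ
  · simp [gaussianReal_zero_var]
  have hmap : (gaussianReal 0 1).map (fun x => m + σ * x) = gaussianReal m (σ ^ 2).toNNReal := by
    rw [← Function.comp_def (m + ·) (σ * ·),
      ← Measure.map_map (measurable_const_add m) (measurable_const_mul σ),
      gaussianReal_map_const_mul, gaussianReal_map_const_add]
    congr 1
    · ring
    · ext; simp [sq_nonneg]
  rw [← hmap]
  exact ((measurableEmbedding_addLeft m).comp (measurableEmbedding_mulLeft₀ hσ)).integral_map f

theorem HasDerivAt.tendsto_slope_one_div_nat_add_one {φ : ℝ → ℝ} {φ' t : ℝ}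
    (h : HasDerivAt φ φ' t) :
    Tendsto (fun n : ℕ => ((n : ℝ) + 1) * (φ (t + 1 / (n + 1)) - φ t)) atTop (𝓝 φ') := by
  have hseq : Tendsto (fun n : ℕ => 1 / ((n : ℝ) + 1)) atTop (𝓝[≠] 0) :=
    tendsto_nhdsWithin_iff.2 ⟨tendsto_one_div_add_atTop_nhds_zero_nat,
      Eventually.of_forall fun n => (Nat.one_div_pos_of_nat).ne'⟩
  simpa [Function.comp_def] using h.tendsto_slope_zero.comp hseq

theorem measurable_uncurry_of_hasDerivAt {X : Type*} [MeasurableSpace X] {g g' : ℝ → X → ℝ}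
    (hmeas : ∀ t, Measurable (g t)) (hderiv : ∀ x t, HasDerivAt (g · x) (g' t x) t) :
    Measurable (Function.uncurry g') := by
  have hg : Measurable (Function.uncurry g) := measurable_uncurry_of_continuous_of_measurable
    (fun x => continuous_iff_continuousAt.2 fun t => (hderiv x t).continuousAt) hmeas
  refine measurable_of_tendsto_metrizable (fun n => ?_)
    (tendsto_pi_nhds.2 fun p => (hderiv p.2 p.1).tendsto_slope_one_div_nat_add_one)
  exact (hg.comp ((measurable_fst.add_const _).prodMk measurable_snd)).sub hg |>.const_mul _

theorem lipschitzOnWith_of_hasDerivAt_of_ae_abs_le {φ φ' : ℝ → ℝ} {s : Set ℝ} {C : ℝ≥0}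
    (hs : s.OrdConnected) (hφ : ∀ t ∈ s, HasDerivAt φ (φ' t) t)
    (hbound : ∀ᵐ t, t ∈ s → |φ' t| ≤ C) : LipschitzOnWith C φ s := by
  refine LipschitzOnWith.of_dist_le_mul fun b hb a ha => ?_
  have hsub : Set.uIcc a b ⊆ s := hs.uIcc_subset ha hb
  have hbound' : ∀ᵐ t, t ∈ Set.uIoc a b → ‖φ' t‖ ≤ C :=
    hbound.mono fun t ht hab => ht (hsub (Set.uIoc_subset_uIcc hab))
  have hderiv_eq : Set.EqOn φ' (deriv φ) (Set.uIcc a b) := fun t ht => (hφ t (hsub ht)).deriv.symm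
  have hint : IntervalIntegrable φ' volume a b := by
    refine (intervalIntegrable_const (c := (C : ℝ))).mono_fun' ?_ ?_
    · exact (measurable_deriv φ).aestronglyMeasurable.congr
        ((ae_restrict_mem measurableSet_uIoc).mono fun t ht =>
          (hderiv_eq (Set.uIoc_subset_uIcc ht)).symm)
    · exact (ae_restrict_iff' measurableSet_uIoc).2 hbound'
  rw [Real.dist_eq, Real.dist_eq,
    ← intervalIntegral.integral_eq_sub_of_hasDerivAt (fun t ht => hφ t (hsub ht)) hint]
  exact intervalIntegral.norm_integral_le_of_norm_le_const_ae hbound'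

theorem LocallyDominated.congr {X : Type*} [MeasurableSpace X] {ν : Measure X} {g h : ℝ → X → ℝ}
    (hg : LocallyDominated ν g) (hgh : ∀ t, g t =ᵐ[ν] h t) : LocallyDominated ν h := by
  intro θ₀
  obtain ⟨ε, hε, m, hm, hm_nonneg, hbound⟩ := hg θ₀
  refine ⟨ε, hε, m, hm, hm_nonneg, fun t ht => ?_⟩
  filter_upwards [hbound t ht, hgh t] with x hx hx' using hx' ▸ hx

theorem LocallyDominated.hasDerivAt_integral {X : Type*} [MeasurableSpace X] {ν : Measure X}
    [SFinite ν] {g g' : ℝ → X → ℝ} (hdom : LocallyDominated ν g')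
    (hmeas : ∀ t, Measurable (g t)) (hderiv : ∀ x t, HasDerivAt (g · x) (g' t x) t)
    {θ : ℝ} (hint : Integrable (g θ) ν) :
    HasDerivAt (fun t => ∫ x, g t x ∂ν) (∫ x, g' θ x ∂ν) θ := by
  obtain ⟨ε, hε, m, hm, -, hbound⟩ := hdom θ
  set M := hm.aemeasurable.mk m
  have hg' : Measurable (Function.uncurry g') := measurable_uncurry_of_hasDerivAt hmeas hderiv
  have hswap : ∀ᵐ x ∂ν, ∀ᵐ t, t ∈ Metric.ball θ ε → |g' t x| ≤ M x := by
    rw [← Measure.ae_ae_comm]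
    · refine ae_of_all _ fun t => ?_
      by_cases ht : t ∈ Metric.ball θ ε
      · filter_upwards [hbound t ht, hm.aemeasurable.ae_eq_mk] with x hx hxM _
          using hx.trans_eq hxM
      · exact ae_of_all _ fun _ ht' => absurd ht' ht
    · exact (measurableSet_ball.preimage measurable_fst).himp
        (measurableSet_le hg'.abs (hm.aemeasurable.measurable_mk.comp measurable_snd))
  have hlip : ∀ᵐ x ∂ν, LipschitzOnWith (Real.nnabs (M x)) (g · x) (Metric.ball θ ε) :=
    hswap.mono fun x hx => lipschitzOnWith_of_hasDerivAt_of_ae_abs_le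
      (convex_ball θ ε).ordConnected (fun t _ => hderiv x t)
      (hx.mono fun t ht hts => (ht hts).trans (by simp [le_abs_self]))
  exact (hasDerivAt_integral_of_dominated_loc_of_lip (Metric.ball_mem_nhds θ hε)
    (Eventually.of_forall fun t => (hmeas t).aestronglyMeasurable) hint
    (hg'.comp measurable_prodMk_left).aestronglyMeasurable hlip
    (hm.congr hm.aemeasurable.ae_eq_mk) (ae_of_all _ fun x => hderiv x θ)).2

theorem LocallyDominated.hasDerivAt_integral_of_ae {X : Type*} [MeasurableSpace X]
    {ν : Measure X} [SFinite ν] {g g' : ℝ → X → ℝ} (hdom : LocallyDominated ν g')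
    (hmeas : ∀ t, Measurable (g t)) (hderiv : ∀ᵐ x ∂ν, ∀ t, HasDerivAt (g · x) (g' t x) t)
    {θ : ℝ} (hint : Integrable (g θ) ν) :
    HasDerivAt (fun t => ∫ x, g t x ∂ν) (∫ x, g' θ x ∂ν) θ := by
  -- Cutting `g` down to a measurable full-measure set makes the derivative exist everywhere.
  obtain ⟨S, hS, hSmeas, hSderiv⟩ := hderiv.exists_measurable_mem
  have hind : ∀ h : ℝ → X → ℝ, ∀ t, S.indicator (h t) =ᵐ[ν] h t := fun h t => by
    filter_upwards [hS] with x hx using Set.indicator_of_mem hx _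
  have hderivS : ∀ x t, HasDerivAt (fun s => S.indicator (g s) x) (S.indicator (g' t) x) t := by
    intro x t
    by_cases hx : x ∈ S
    · simpa only [Set.indicator_of_mem hx] using hSderiv x hx t
    · simpa only [Set.indicator_of_notMem hx] using hasDerivAt_const t (0 : ℝ)
  have := (hdom.congr fun t => (hind g' t).symm).hasDerivAt_integral
    (fun t => (hmeas t).indicator hSmeas) hderivS (hint.congr (hind g θ).symm)
  simpa only [integral_congr_ae (hind _ _)] using this

theorem normal_reparam_unbiased_general (μ σ : ℝ → ℝ)
    (f : ℝ → ℝ → ℝ) (g g' : ℝ → ℝ → ℝ)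
    (hg : ∀ θ x, g θ x = f θ (μ θ + σ θ * x))
    (hmeas : ∀ θ, Measurable (g θ))
    (hint : ∀ θ, Integrable (g θ) (gaussianReal 0 1))
    (hderiv : ∀ᵐ x ∂(gaussianReal 0 1), ∀ θ, HasDerivAt (fun θ' => g θ' x) (g' θ x) θ)
    (hdom : LocallyDominated (gaussianReal 0 1) g') :
    ∀ θ : ℝ,
      HasDerivAt (fun θ' => ∫ y, f θ' y ∂(gaussianReal (μ θ') (((σ θ') ^ 2).toNNReal)))
        (∫ x, g' θ x ∂(gaussianReal 0 1)) θ := by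
  intro θ
  simp_rw [integral_gaussianReal_eq_integral_affine, ← hg]
  exact hdom.hasDerivAt_integral_of_ae hmeas hderiv (hint θ)

/-- **Unbiasedness of the reparameterization-trick (REPARAM) gradient estimator for
Gaussian sampling.**  With `g θ x = f θ (μ θ + σ θ · x)` measurable and integrable
w.r.t. the standard Gaussian, differentiable in `θ` with derivative `g'` for a.e. `x`,
and `g'` locally dominated, the loss `L θ = ∫ f θ y dN(μ θ, (σ θ)²)(y)` is
differentiable with `L'(θ) = ∫ g' θ x dN(0,1)(x)`. -/
theorem normal_reparam_unbiased (μ σ : ℝ → ℝ) (hσ : ∀ θ, 0 < σ θ)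
    (f : ℝ → ℝ → ℝ) (g g' : ℝ → ℝ → ℝ)
    (hg : ∀ θ x, g θ x = f θ (μ θ + σ θ * x))
    (hmeas : ∀ θ, Measurable (g θ))
    (hint : ∀ θ, Integrable (g θ) (gaussianReal 0 1))
    (hderiv : ∀ᵐ x ∂(gaussianReal 0 1), ∀ θ, HasDerivAt (fun θ' => g θ' x) (g' θ x) θ)
    (hdom : LocallyDominated (gaussianReal 0 1) g') :
    ∀ θ : ℝ,
      HasDerivAt (fun θ' => ∫ y, f θ' y ∂(gaussianReal (μ θ') (((σ θ') ^ 2).toNNReal)))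
        (∫ x, g' θ x ∂(gaussianReal 0 1)) θ :=
  normal_reparam_unbiased_general μ σ f g g' hg hmeas hint hderiv hdom
end

section
/- Let μ, σ : ℝ → ℝ be differentiable with σ(θ) > 0 for all θ, let f : ℝ → ℝ → ℝ, and let ϕ(θ, x) = gaussianPDFReal (μ θ) ((σ θ)²) x denote the Gaussian density. Assume: (i) for each θ, x ↦ f(θ)(x)·ϕ(θ, x) is Lebesgue-measurable and Lebesgue-integrable; (ii) for Lebesgue-almost every x, the map θ ↦ f(θ)(x)·ϕ(θ, x) is differentiable; and (iii) its θ-derivative is locally dominated with respect to Lebesgue measure. Then the loss L(θ) = ∫ f(θ)(x) d(gaussianReal (μ θ) ((σ θ)²))(x) is differentiable at every θ, with L'(θ) = ∫ ( f(θ)(x)·(∂_θ ϕ(θ, x) / ϕ(θ, x)) + ∂_θ f(θ)(x) ) d(gaussianReal (μ θ) ((σ θ)²))(x). That is, the REINFORCE (score-function) gradient estimator for normal_REINFORCE is unbiased. -/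
/-!
Since `gaussianReal (μ θ) (σ θ ^ 2)` has density `ϕ θ`, the loss is `∫ f θ x ϕ θ x dx`, and the
REINFORCE formula is the product rule `∂(f ϕ) = ϕ (f ∂ϕ / ϕ + ∂f)` taken under the integral sign.
To differentiate under the integral one needs, for a.e. `x`, a bound on `∂_θ (f ϕ)` valid for
all `θ` near `θ₀`, whereas local domination gives a bound for each `θ` off a `θ`-dependent null
set. Fubini swaps the quantifiers to "for a.e. `x`, for a.e. `θ` near `θ₀`"; the joint
measurability this needs comes from writing the derivative as a limit of difference quotients,
after redefining `f ϕ` as `0` on the null set of `x` where it is not differentiable. By the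
fundamental theorem of calculus the a.e. bound still makes `θ ↦ f θ x ϕ θ x` Lipschitz near `θ₀`,
which is what dominated differentiation requires.
-/

open MeasureTheory ProbabilityTheory Filter Topology
open scoped NNReal

lemma tendsto_slope_inv_natCast {g : ℝ → ℝ} {g' t : ℝ} (h : HasDerivAt g g' t) :
    Tendsto (fun n : ℕ => (n : ℝ) * (g (t + (n : ℝ)⁻¹) - g t)) atTop (𝓝 g') := by
  have hseq : Tendsto (fun n : ℕ => (n : ℝ)⁻¹) atTop (𝓝[≠] 0) :=
    tendsto_nhdsWithin_mono_right (fun _ hx => ne_of_gt hx)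
      (tendsto_inv_atTop_nhdsGT_zero.comp tendsto_natCast_atTop_atTop)
  simpa [Function.comp_def] using (hasDerivAt_iff_tendsto_slope_zero.mp h).comp hseq

lemma lipschitzOnWith_of_ae_norm_deriv_le {g : ℝ → ℝ} {s : Set ℝ} {C : ℝ≥0}
    (hg : Differentiable ℝ g) (hs : s.OrdConnected)
    (hbound : ∀ᵐ t ∂volume.restrict s, ‖deriv g t‖ ≤ C) : LipschitzOnWith C g s := by
  refine LipschitzOnWith.of_dist_le_mul fun a ha b hb => ?_
  have hsub : Set.uIoc b a ⊆ s := Set.uIoc_subset_uIcc.trans (hs.uIcc_subset hb ha)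
  have hbound' : ∀ᵐ t ∂volume.restrict (Set.uIoc b a), ‖deriv g t‖ ≤ C :=
    ae_restrict_of_ae_restrict_of_subset hsub hbound
  have hint : IntervalIntegrable (deriv g) volume b a :=
    intervalIntegrable_const.mono_fun' (measurable_deriv g).aestronglyMeasurable hbound'
  calc dist (g a) (g b) = ‖∫ t in b..a, deriv g t‖ := by
        rw [intervalIntegral.integral_eq_sub_of_hasDerivAt (fun t _ => (hg t).hasDerivAt) hint,
          Real.dist_eq, Real.norm_eq_abs]
    _ ≤ C * |a - b| := intervalIntegral.norm_integral_le_of_norm_le_const_ae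
          ((ae_restrict_iff' measurableSet_uIoc).mp hbound')
    _ = C * dist a b := by rw [Real.dist_eq]

lemma ae_ae_abs_le_of_ae_ae {T X : Type*} [MeasurableSpace T] [MeasurableSpace X]
    {μ : Measure T} {ν : Measure X} [SFinite μ] [SFinite ν] {g : T → X → ℝ} {m : X → ℝ}
    (hg : Measurable (Function.uncurry g)) (hm : AEMeasurable m ν)
    (h : ∀ᵐ t ∂μ, ∀ᵐ x ∂ν, |g t x| ≤ m x) :
    ∀ᵐ x ∂ν, ∀ᵐ t ∂μ, |g t x| ≤ m x := by
  have hmeas : MeasurableSet {p : T × X | |g p.1 p.2| ≤ hm.mk m p.2} :=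
    measurableSet_le hg.abs (hm.measurable_mk.comp measurable_snd)
  have h' : ∀ᵐ t ∂μ, ∀ᵐ x ∂ν, |g t x| ≤ hm.mk m x := by
    filter_upwards [h] with t ht
    filter_upwards [ht, hm.ae_eq_mk] with x hx hmx
    rwa [← hmx]
  filter_upwards [(Measure.ae_ae_comm hmeas).mp h', hm.ae_eq_mk] with x hx hmx
  simpa only [hmx] using hx

section

variable {X : Type*} [MeasurableSpace X] {ν : Measure X}

lemma measurable_deriv_uncurry {F : ℝ → X → ℝ}
    (hF_meas : ∀ t, Measurable (F t)) (hF_diff : ∀ x, Differentiable ℝ (F · x)) :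
    Measurable (fun p : ℝ × X => deriv (F · p.2) p.1) := by
  have hF : Measurable (Function.uncurry F) :=
    measurable_uncurry_of_continuous_of_measurable (fun x => (hF_diff x).continuous) hF_meas
  refine measurable_of_tendsto_metrizable
    (f := fun (n : ℕ) (p : ℝ × X) => (n : ℝ) * (F (p.1 + (n : ℝ)⁻¹) p.2 - F p.1 p.2))
    (fun n => ?_)
    (tendsto_pi_nhds.mpr fun p => tendsto_slope_inv_natCast (hF_diff p.2 p.1).hasDerivAt)
  exact ((hF.comp ((measurable_fst.add_const _).prodMk measurable_snd)).sub hF).const_mul _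

theorem hasDerivAt_integral_of_locallyDominated_of_differentiable [SFinite ν]
    {F : ℝ → X → ℝ} {θ : ℝ}
    (hF_meas : ∀ t, Measurable (F t)) (hF_diff : ∀ x, Differentiable ℝ (F · x))
    (hF_int : Integrable (F θ) ν) (hdom : LocallyDominated ν fun t x => deriv (F · x) t) :
    HasDerivAt (fun t => ∫ x, F t x ∂ν) (∫ x, deriv (F · x) θ ∂ν) θ := by
  have hF' := measurable_deriv_uncurry hF_meas hF_diff
  obtain ⟨ε, hε, m, hm_int, hm_nonneg, hm_bound⟩ := hdom θ
  have hbound : ∀ᵐ x ∂ν, ∀ᵐ t ∂volume.restrict (Metric.ball θ ε), |deriv (F · x) t| ≤ m x :=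
    ae_ae_abs_le_of_ae_ae (g := fun t x => deriv (F · x) t) hF' hm_int.aemeasurable
      (ae_restrict_of_forall_mem measurableSet_ball fun t ht =>
        hm_bound t (by rwa [Metric.mem_ball, Real.dist_eq] at ht))
  have hlip : ∀ᵐ x ∂ν, LipschitzOnWith (Real.nnabs (m x)) (F · x) (Metric.ball θ ε) := by
    filter_upwards [hbound] with x hx
    refine lipschitzOnWith_of_ae_norm_deriv_le (hF_diff x) (convex_ball θ ε).ordConnected ?_
    filter_upwards [hx] with t ht
    rwa [Real.coe_nnabs, abs_of_nonneg (hm_nonneg x), Real.norm_eq_abs]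
  exact (hasDerivAt_integral_of_dominated_loc_of_lip (Metric.ball_mem_nhds θ hε)
    (Eventually.of_forall fun t => (hF_meas t).aestronglyMeasurable) hF_int
    (hF'.comp measurable_prodMk_left).aestronglyMeasurable hlip hm_int
    (ae_of_all _ fun x => (hF_diff x θ).hasDerivAt)).2

lemma LocallyDominated.congr_ae {g g' : ℝ → X → ℝ} (hg : LocallyDominated ν g)
    (hgg' : ∀ᵐ x ∂ν, ∀ t, g t x = g' t x) : LocallyDominated ν g' := by
  intro θ₀
  obtain ⟨ε, hε, m, hm_int, hm_nonneg, hm_bound⟩ := hg θ₀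
  refine ⟨ε, hε, m, hm_int, hm_nonneg, fun t ht => ?_⟩
  filter_upwards [hm_bound t ht, hgg'] with x hx hx'
  rwa [← hx']

lemma exists_differentiable_ae_eq {F : ℝ → X → ℝ} (hF_meas : ∀ t, Measurable (F t))
    (hF_diff : ∀ᵐ x ∂ν, ∀ t, DifferentiableAt ℝ (F · x) t) :
    ∃ G : ℝ → X → ℝ, (∀ t, Measurable (G t)) ∧ (∀ x, Differentiable ℝ (G · x)) ∧
      ∀ᵐ x ∂ν, (G · x) = (F · x) := by
  set N := toMeasurable ν {x | ¬ ∀ t, DifferentiableAt ℝ (F · x) t}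
  have hN : ∀ᵐ x ∂ν, x ∉ N := measure_eq_zero_iff_ae_notMem.mp (by rwa [measure_toMeasurable])
  refine ⟨fun t => Nᶜ.indicator (F t),
    fun t => (hF_meas t).indicator (measurableSet_toMeasurable _ _).compl, fun x => ?_, ?_⟩
  · by_cases hx : x ∈ N
    · simp only [Set.indicator_of_notMem (Set.notMem_compl_iff.mpr hx)]
      exact differentiable_const 0
    · simp only [Set.indicator_of_mem (Set.mem_compl hx)]
      exact not_not.mp fun h => hx (subset_toMeasurable _ _ h)
  · filter_upwards [hN] with x hx
    simp only [Set.indicator_of_mem (Set.mem_compl hx)]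

theorem hasDerivAt_integral_of_locallyDominated [SFinite ν] {F : ℝ → X → ℝ} {θ : ℝ}
    (hF_meas : ∀ t, Measurable (F t)) (hF_diff : ∀ᵐ x ∂ν, ∀ t, DifferentiableAt ℝ (F · x) t)
    (hF_int : Integrable (F θ) ν) (hdom : LocallyDominated ν fun t x => deriv (F · x) t) :
    HasDerivAt (fun t => ∫ x, F t x ∂ν) (∫ x, deriv (F · x) θ ∂ν) θ := by
  obtain ⟨G, hG_meas, hG_diff, hGF⟩ := exists_differentiable_ae_eq hF_meas hF_diff
  have hG_int : Integrable (G θ) ν :=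
    hF_int.congr (by filter_upwards [hGF] with x hx using (congrFun hx θ).symm)
  have hG_dom : LocallyDominated ν fun t x => deriv (G · x) t :=
    hdom.congr_ae (by filter_upwards [hGF] with x hx t using by rw [hx])
  convert hasDerivAt_integral_of_locallyDominated_of_differentiable hG_meas hG_diff hG_int
    hG_dom using 1
  · ext t
    exact integral_congr_ae (by filter_upwards [hGF] with x hx using (congrFun hx t).symm)
  · exact integral_congr_ae (by filter_upwards [hGF] with x hx using by rw [hx])

end

lemma differentiableAt_gaussianPDFReal_comp {μ σ : ℝ → ℝ} {θ : ℝ} (x : ℝ)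
    (hμ : DifferentiableAt ℝ μ θ) (hσ : DifferentiableAt ℝ σ θ) (hσ0 : σ θ ≠ 0) :
    DifferentiableAt ℝ (fun t => gaussianPDFReal (μ t) ((σ t) ^ 2).toNNReal x) θ := by
  simp only [gaussianPDFReal, Real.coe_toNNReal _ (sq_nonneg _)]
  fun_prop (disch := positivity)

lemma deriv_mul_eq_mul_score_add {g p : ℝ → ℝ} {θ : ℝ}
    (hgp : DifferentiableAt ℝ (fun t => g t * p t) θ) (hp : DifferentiableAt ℝ p θ)
    (hp0 : p θ ≠ 0) :
    deriv (fun t => g t * p t) θ = p θ * (g θ * (deriv p θ / p θ) + deriv g θ) := by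
  have hg : DifferentiableAt ℝ g θ := by
    refine (hgp.div hp hp0).congr_of_eventuallyEq ?_
    filter_upwards [hp.continuousAt.eventually_ne hp0] with t ht
    exact (mul_div_cancel_right₀ _ ht).symm
  rw [deriv_fun_mul hg hp]
  field_simp
  ring

/-- **Unbiasedness of the REINFORCE (score-function) gradient estimator for
`normal_REINFORCE`.**  Let `μ, σ` be differentiable with `σ > 0`, and let
`ϕ θ x` be the Gaussian density of `N(μ θ, (σ θ)²)`.  If `x ↦ f θ x · ϕ θ x`
is Lebesgue-measurable and integrable for each `θ`, differentiable in `θ` for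
a.e. `x`, with locally dominated `θ`-derivative, then the loss
`L θ = ∫ f θ x dN(μ θ, (σ θ)²)(x)` is differentiable with
`L'(θ) = ∫ (f θ x · (∂_θ ϕ θ x / ϕ θ x) + ∂_θ f θ x) dN(μ θ, (σ θ)²)(x)`. -/
theorem normal_reinforce_unbiased (μ σ : ℝ → ℝ)
    (hμ : Differentiable ℝ μ) (hσd : Differentiable ℝ σ) (hσ : ∀ θ, 0 < σ θ)
    (f : ℝ → ℝ → ℝ) (φ : ℝ → ℝ → ℝ)
    (hφ : ∀ θ x, φ θ x = gaussianPDFReal (μ θ) (((σ θ) ^ 2).toNNReal) x)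
    (hmeas : ∀ θ, Measurable (fun x => f θ x * φ θ x))
    (hint : ∀ θ, Integrable (fun x => f θ x * φ θ x) (volume : Measure ℝ))
    (hderiv : ∀ᵐ x ∂(volume : Measure ℝ), ∀ θ : ℝ,
      DifferentiableAt ℝ (fun θ' => f θ' x * φ θ' x) θ)
    (hdom : LocallyDominated (volume : Measure ℝ)
      (fun θ x => deriv (fun θ' => f θ' x * φ θ' x) θ)) :
    ∀ θ : ℝ,
      HasDerivAt (fun θ' => ∫ x, f θ' x ∂(gaussianReal (μ θ') (((σ θ') ^ 2).toNNReal)))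
        (∫ x, (f θ x * (deriv (fun θ' => φ θ' x) θ / φ θ x)
            + deriv (fun θ' => f θ' x) θ)
          ∂(gaussianReal (μ θ) (((σ θ) ^ 2).toNNReal))) θ := by
  intro θ
  have hv : ∀ t, ((σ t) ^ 2).toNNReal ≠ 0 := fun t =>
    (Real.toNNReal_pos.mpr (pow_pos (hσ t) 2)).ne'
  have hφ_pos : ∀ x, 0 < φ θ x := fun x => by
    rw [hφ]
    exact gaussianPDFReal_pos _ _ _ (hv θ)
  have hφ_diff : ∀ x, DifferentiableAt ℝ (φ · x) θ := fun x => by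
    simpa only [hφ] using differentiableAt_gaussianPDFReal_comp x (hμ θ) (hσd θ) (hσ θ).ne'
  have hloss : (fun t => ∫ x, f t x ∂gaussianReal (μ t) ((σ t) ^ 2).toNNReal) =
      fun t => ∫ x, f t x * φ t x := by
    ext t
    simp only [integral_gaussianReal_eq_integral_smul (hv t), ← hφ, smul_eq_mul, mul_comm]
  have hscore : ∫ x, (f θ x * (deriv (φ · x) θ / φ θ x) + deriv (f · x) θ)
        ∂gaussianReal (μ θ) ((σ θ) ^ 2).toNNReal =
      ∫ x, deriv (fun t => f t x * φ t x) θ := by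
    rw [integral_gaussianReal_eq_integral_smul (hv θ)]
    refine integral_congr_ae ?_
    filter_upwards [hderiv] with x hx
    rw [smul_eq_mul, ← hφ, deriv_mul_eq_mul_score_add (hx θ) (hφ_diff x) (hφ_pos x).ne']
  rw [hloss, hscore]
  exact hasDerivAt_integral_of_locallyDominated hmeas hderiv (hint θ) hdom
end

section
/- Let θ₀ ∈ (0,1) and f : ℝ → ℕ → ℝ. Suppose there exist ε > 0 with (θ₀ − ε, θ₀ + ε) ⊆ (0,1) and C ≥ 0 such that for all θ ∈ (θ₀ − ε, θ₀ + ε) and all n ∈ ℕ, the map θ ↦ f θ n is differentiable at θ, |f θ n| ≤ C, and |∂_θ f θ n| ≤ C. Then the loss L(θ) = ∑'_{n ∈ ℕ} f θ n · (1 − θ)ⁿ · θ is differentiable at θ₀, with L'(θ₀) = ∑'_{n ∈ ℕ} (1 − θ₀)ⁿ · θ₀ · ( f θ₀ n · (1/θ₀ − n/(1 − θ₀)) + ∂_θ f θ₀ n ). That is, the REINFORCE gradient estimator for the geometric distribution is unbiased. -/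
/-!
Differentiate the series term by term. On a neighbourhood of `θ₀` that stays above `θ₀ / 2`
we have `1 - θ ≤ r := 1 - θ₀ / 2 < 1`, so the pmf `(1 - θ)ⁿ θ` and its derivative
`(1 - θ)ⁿ - n (1 - θ)ⁿ⁻¹ θ` are dominated by `rⁿ` and `rⁿ + n rⁿ⁻¹`; with the uniform bounds
on `f` and `f'` this dominates the differentiated series by a summable sequence. The
derivative of the pmf is the pmf times the score, which puts the termwise derivative in
REINFORCE form.
-/

open Set

theorem geometric_pmf_mul_score {θ : ℝ} (h0 : θ ≠ 0) (h1 : 1 - θ ≠ 0) (n : ℕ) :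
    (1 - θ) ^ n * θ * (1 / θ - n / (1 - θ)) = (1 - θ) ^ n - n * (1 - θ) ^ (n - 1) * θ := by
  cases n with
  | zero => simp [h0]
  | succ n =>
    simp only [Nat.add_sub_cancel, pow_succ]
    field_simp

theorem hasDerivAt_geometric_pmf {θ : ℝ} (h0 : θ ≠ 0) (h1 : 1 - θ ≠ 0) (n : ℕ) :
    HasDerivAt (fun t => (1 - t) ^ n * t) ((1 - θ) ^ n * θ * (1 / θ - n / (1 - θ))) θ := by
  rw [geometric_pmf_mul_score h0 h1]
  exact ((((hasDerivAt_id' θ).const_sub 1).fun_pow n).mul (hasDerivAt_id' θ)).congr_deriv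
    (by ring)

theorem abs_geometric_pmf_le {θ r : ℝ} (hθ : θ ∈ Icc (0 : ℝ) 1) (hr : 1 - θ ≤ r) (n : ℕ) :
    |(1 - θ) ^ n * θ| ≤ r ^ n := by
  have h1θ : 0 ≤ 1 - θ := by linarith [hθ.2]
  rw [abs_of_nonneg (by positivity [hθ.1])]
  calc (1 - θ) ^ n * θ ≤ (1 - θ) ^ n := mul_le_of_le_one_right (by positivity) hθ.2
    _ ≤ r ^ n := pow_le_pow_left₀ h1θ hr n

theorem abs_geometric_pmf_mul_score_le {θ r : ℝ} (hθ : θ ∈ Ioo (0 : ℝ) 1) (hr : 1 - θ ≤ r)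
    (n : ℕ) : |(1 - θ) ^ n * θ * (1 / θ - n / (1 - θ))| ≤ r ^ n + n * r ^ (n - 1) := by
  have h1θ : 0 ≤ 1 - θ := by linarith [hθ.2]
  rw [geometric_pmf_mul_score hθ.1.ne' (by linarith [hθ.2])]
  refine (abs_sub _ _).trans (add_le_add ?_ ?_)
  · rw [abs_of_nonneg (by positivity)]
    exact pow_le_pow_left₀ h1θ hr n
  · rw [abs_of_nonneg (by positivity [hθ.1.le])]
    calc n * (1 - θ) ^ (n - 1) * θ ≤ n * (1 - θ) ^ (n - 1) :=
          mul_le_of_le_one_right (by positivity) hθ.2.le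
      _ ≤ n * r ^ (n - 1) := by gcongr

theorem summable_natCast_mul_pow_pred {R : Type*} [NormedRing R] [HasSummableGeomSeries R]
    {r : R} (hr : ‖r‖ < 1) : Summable fun n : ℕ => (n : R) * r ^ (n - 1) := by
  rw [← summable_nat_add_iff 1]
  simpa using summable_descFactorial_mul_geometric_of_norm_lt_one 1 hr

theorem hasDerivAt_tsum_mul_of_bounded {ι 𝕜 : Type*} [RCLike 𝕜] {s : Set 𝕜} (hs : IsOpen s)
    (hs' : IsPreconnected s) {x : 𝕜} (hx : x ∈ s) {f f' p p' : ι → 𝕜 → 𝕜} {C : ℝ} (hC : 0 ≤ C)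
    {u v : ι → ℝ} (hu : Summable u) (hv : Summable v)
    (hf : ∀ i, ∀ y ∈ s, HasDerivAt (f i) (f' i y) y)
    (hp : ∀ i, ∀ y ∈ s, HasDerivAt (p i) (p' i y) y)
    (hfC : ∀ i, ∀ y ∈ s, ‖f i y‖ ≤ C) (hf'C : ∀ i, ∀ y ∈ s, ‖f' i y‖ ≤ C)
    (hpu : ∀ i, ∀ y ∈ s, ‖p i y‖ ≤ u i) (hp'v : ∀ i, ∀ y ∈ s, ‖p' i y‖ ≤ v i) :
    HasDerivAt (fun y => ∑' i, f i y * p i y) (∑' i, (f' i x * p i x + f i x * p' i x)) x := by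
  have hbound : ∀ i, ∀ y ∈ s, ‖f' i y * p i y + f i y * p' i y‖ ≤ C * u i + C * v i :=
    fun i y hy => (norm_add_le _ _).trans <| add_le_add
      ((norm_mul_le _ _).trans (mul_le_mul (hf'C i y hy) (hpu i y hy) (norm_nonneg _) hC))
      ((norm_mul_le _ _).trans (mul_le_mul (hfC i y hy) (hp'v i y hy) (norm_nonneg _) hC))
  refine hasDerivAt_tsum_of_isPreconnected ((hu.mul_left C).add (hv.mul_left C)) hs hs'
    (fun i y hy => (hf i y hy).mul (hp i y hy)) hbound hx ?_ hx
  exact (hu.mul_left C).of_norm_bounded fun i =>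
    (norm_mul_le _ _).trans (mul_le_mul (hfC i x hx) (hpu i x hx) (norm_nonneg _) hC)

/-- **Unbiasedness of the REINFORCE gradient estimator for the geometric distribution.**
Let `θ₀ ∈ (0,1)` and suppose on a neighborhood `(θ₀ − ε, θ₀ + ε) ⊆ (0,1)` the
expectand `f θ n` is differentiable in `θ` with derivative `f' θ n`, and both `f`
and `f'` are uniformly bounded by `C` there.  Then
`L θ = ∑'_n f θ n · (1 − θ)ⁿ · θ` is differentiable at `θ₀`, with
`L'(θ₀) = ∑'_n (1 − θ₀)ⁿ · θ₀ · (f θ₀ n · (1/θ₀ − n/(1 − θ₀)) + f' θ₀ n)`. -/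
theorem geometric_reinforce_unbiased (θ₀ : ℝ) (h0 : 0 < θ₀) (h1 : θ₀ < 1)
    (f f' : ℝ → ℕ → ℝ) (ε : ℝ) (hε : 0 < ε)
    (hsub : Set.Ioo (θ₀ - ε) (θ₀ + ε) ⊆ Set.Ioo (0 : ℝ) 1)
    (C : ℝ) (hC : 0 ≤ C)
    (hderiv : ∀ θ ∈ Set.Ioo (θ₀ - ε) (θ₀ + ε), ∀ n : ℕ,
      HasDerivAt (fun θ' => f θ' n) (f' θ n) θ)
    (hfb : ∀ θ ∈ Set.Ioo (θ₀ - ε) (θ₀ + ε), ∀ n : ℕ, |f θ n| ≤ C)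
    (hf'b : ∀ θ ∈ Set.Ioo (θ₀ - ε) (θ₀ + ε), ∀ n : ℕ, |f' θ n| ≤ C) :
    HasDerivAt (fun θ => ∑' n : ℕ, f θ n * (1 - θ) ^ n * θ)
      (∑' n : ℕ, (1 - θ₀) ^ n * θ₀ *
        (f θ₀ n * (1 / θ₀ - (n : ℝ) / (1 - θ₀)) + f' θ₀ n)) θ₀ := by
  set s := Ioo (max (θ₀ - ε) (θ₀ / 2)) (θ₀ + ε)
  have hs : s ⊆ Ioo (θ₀ - ε) (θ₀ + ε) := Ioo_subset_Ioo_left (le_max_left _ _)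
  have hθ₀ : θ₀ ∈ s := ⟨max_lt (by linarith) (by linarith), by linarith⟩
  have hs01 : ∀ θ ∈ s, θ ∈ Ioo (0 : ℝ) 1 := fun θ hθ => hsub (hs hθ)
  have hr : ∀ θ ∈ s, 1 - θ ≤ 1 - θ₀ / 2 := fun θ hθ => by linarith [(max_lt_iff.1 hθ.1).2]
  have hr1 : ‖1 - θ₀ / 2‖ < 1 := by rw [Real.norm_eq_abs, abs_lt]; constructor <;> linarith
  have hgeom := summable_geometric_of_norm_lt_one hr1
  have key := hasDerivAt_tsum_mul_of_bounded isOpen_Ioo isPreconnected_Ioo hθ₀ hC hgeom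
    (hgeom.add (summable_natCast_mul_pow_pred hr1)) (f := fun n θ => f θ n)
    (p := fun n θ => (1 - θ) ^ n * θ) (fun n θ hθ => hderiv θ (hs hθ) n)
    (fun n θ hθ =>
      hasDerivAt_geometric_pmf (hs01 θ hθ).1.ne' (sub_ne_zero.2 (hs01 θ hθ).2.ne') n)
    (fun n θ hθ => hfb θ (hs hθ) n) (fun n θ hθ => hf'b θ (hs hθ) n)
    (fun n θ hθ => abs_geometric_pmf_le (Ioo_subset_Icc_self (hs01 θ hθ)) (hr θ hθ) n)
    (fun n θ hθ => abs_geometric_pmf_mul_score_le (hs01 θ hθ) (hr θ hθ) n)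
  simp only [mul_assoc] at key ⊢
  exact key.congr_deriv (tsum_congr fun n => by ring)
end

section
/- Let f : ℕ → ℝ be bounded and θ₀ > 0. Then the function L(θ) = ∑'_{n ∈ ℕ} f(n)·exp(−θ)·θⁿ/n! is differentiable at θ₀, with L'(θ₀) = ∑'_{n ∈ ℕ} (f(n+1) − f(n))·exp(−θ₀)·θ₀ⁿ/n!. That is, for bounded f, the weak-derivative estimator that samples n ∼ Poisson(θ₀) and returns f(n+1) − f(n) is an unbiased estimator of the derivative of the Poisson expectation E_{n∼Poisson(θ)}[f(n)]. -/
/-!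
Writing `g a x = ∑ aₙ xⁿ/n!` for the exponential generating function of a bounded sequence,
the Poisson expectation is `e^{-θ} · g f θ`. Once the constant term is split off, the termwise
derivative of `g a` is `g` of the shifted sequence, since `d/dx x^{n+1}/(n+1)! = xⁿ/n!`, and on
the ball of radius `R` these derivatives are dominated by the summable `C Rⁿ/n!`. The product rule
then gives `e^{-θ} (g (f ∘ succ) θ - g f θ)`, which is the claimed series.
-/
section ExpGeneratingFunction

variable {𝕜 : Type*} [RCLike 𝕜] {a : ℕ → 𝕜} {C : ℝ}

theorem hasDerivAt_pow_succ_div_factorial_succ (n : ℕ) (x : 𝕜) :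
    HasDerivAt (fun y : 𝕜 => y ^ (n + 1) / (n + 1).factorial) (x ^ n / n.factorial) x := by
  refine ((hasDerivAt_pow (n + 1) x).div_const ((n + 1).factorial : 𝕜)).congr_deriv ?_
  rw [Nat.factorial_succ, Nat.cast_mul, Nat.add_sub_cancel]
  field_simp

theorem norm_mul_pow_div_factorial_le (ha : ∀ n, ‖a n‖ ≤ C) {x : 𝕜} {R : ℝ}
    (hx : ‖x‖ ≤ R) (n : ℕ) : ‖a n * (x ^ n / n.factorial)‖ ≤ C * (R ^ n / n.factorial) := by
  rw [norm_mul, norm_div, norm_pow, RCLike.norm_natCast]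
  have hC : 0 ≤ C := (norm_nonneg _).trans (ha 0)
  gcongr
  exact ha n

theorem summable_mul_pow_div_factorial (ha : ∀ n, ‖a n‖ ≤ C) (x : 𝕜) :
    Summable fun n => a n * (x ^ n / n.factorial) :=
  .of_norm_bounded ((Real.summable_pow_div_factorial ‖x‖).mul_left C)
    (norm_mul_pow_div_factorial_le ha le_rfl)

theorem hasDerivAt_tsum_mul_pow_div_factorial (ha : ∀ n, ‖a n‖ ≤ C) (x : 𝕜) :
    HasDerivAt (fun y => ∑' n, a n * (y ^ n / n.factorial))
      (∑' n, a (n + 1) * (x ^ n / n.factorial)) x := by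
  set R := ‖x‖ + 1
  have hx : x ∈ Metric.ball 0 R := mem_ball_zero_iff.mpr (lt_add_one _)
  have htail₀ : Summable fun n => a (n + 1) * (x ^ (n + 1) / (n + 1).factorial) :=
    (summable_nat_add_iff (f := fun n => a n * (x ^ n / n.factorial)) 1).mpr
      (summable_mul_pow_div_factorial ha x)
  have htail : HasDerivAt (fun y => ∑' n, a (n + 1) * (y ^ (n + 1) / (n + 1).factorial))
      (∑' n, a (n + 1) * (x ^ n / n.factorial)) x :=
    hasDerivAt_tsum_of_isPreconnected ((Real.summable_pow_div_factorial R).mul_left C)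
      Metric.isOpen_ball (convex_ball 0 R).isPreconnected
      (fun n y _ => (hasDerivAt_pow_succ_div_factorial_succ n y).const_mul (a (n + 1)))
      (fun n y hy => norm_mul_pow_div_factorial_le (fun n => ha (n + 1))
        (mem_ball_zero_iff.mp hy).le n)
      hx htail₀ hx
  have hsplit : (fun y => ∑' n, a n * (y ^ n / n.factorial)) =
      fun y => a 0 + ∑' n, a (n + 1) * (y ^ (n + 1) / (n + 1).factorial) := by
    ext y
    rw [(summable_mul_pow_div_factorial ha y).tsum_eq_zero_add]
    simp
  rw [hsplit]
  exact htail.const_add (a 0)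

end ExpGeneratingFunction

theorem poisson_weak_derivative_unbiased_general (f : ℕ → ℝ) (C : ℝ)
    (hf : ∀ n, |f n| ≤ C) (θ₀ : ℝ) :
    HasDerivAt (fun θ => ∑' n : ℕ, f n * (Real.exp (-θ) * θ ^ n / n.factorial))
      (∑' n : ℕ, (f (n + 1) - f n) * (Real.exp (-θ₀) * θ₀ ^ n / n.factorial)) θ₀ := by
  have hf' : ∀ n, ‖f n‖ ≤ C := hf
  have hL : (fun θ => ∑' n : ℕ, f n * (Real.exp (-θ) * θ ^ n / n.factorial)) =
      fun θ => Real.exp (-θ) * ∑' n : ℕ, f n * (θ ^ n / n.factorial) := by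
    ext θ
    rw [← tsum_mul_left]
    exact tsum_congr fun n => by ring
  have hexp : HasDerivAt (fun θ => Real.exp (-θ)) (-Real.exp (-θ₀)) θ₀ := by
    simpa using (hasDerivAt_neg θ₀).exp
  rw [hL]
  refine (hexp.mul (hasDerivAt_tsum_mul_pow_div_factorial hf' θ₀)).congr_deriv ?_
  calc _ = Real.exp (-θ₀) * ∑' n : ℕ, (f (n + 1) * (θ₀ ^ n / n.factorial)
          - f n * (θ₀ ^ n / n.factorial)) := by
        rw [(summable_mul_pow_div_factorial (fun n => hf' (n + 1)) θ₀).tsum_sub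
          (summable_mul_pow_div_factorial hf' θ₀)]
        ring
    _ = _ := by
        rw [← tsum_mul_left]
        exact tsum_congr fun n => by ring

/-- **Correctness of the `poisson_WEAK` built-in derivative.**
For bounded `f : ℕ → ℝ` and `θ₀ > 0`, the Poisson expectation
`L θ = ∑'_n f n · exp(−θ)·θⁿ/n!` is differentiable at `θ₀` with
`L'(θ₀) = ∑'_n (f (n+1) − f n) · exp(−θ₀)·θ₀ⁿ/n!`; i.e. the weak-derivative
estimator that samples `n ∼ Poisson(θ₀)` and returns `f (n+1) − f n` is an
unbiased estimator of the derivative. -/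
theorem poisson_weak_derivative_unbiased (f : ℕ → ℝ) (C : ℝ)
    (hf : ∀ n, |f n| ≤ C) (θ₀ : ℝ) (hθ₀ : 0 < θ₀) :
    HasDerivAt (fun θ => ∑' n : ℕ, f n * (Real.exp (-θ) * θ ^ n / n.factorial))
      (∑' n : ℕ, (f (n + 1) - f n) * (Real.exp (-θ₀) * θ₀ ^ n / n.factorial)) θ₀ :=
  poisson_weak_derivative_unbiased_general f C hf θ₀
end

section
/- Let α be a finite type and N ≥ 2 a natural number. Let p : α → ℝ with p(x) > 0 for all x and ∑_{x ∈ α} p(x) = 1, and let p' : α → ℝ with ∑_{x ∈ α} p'(x) = 0 (the pointwise derivative of a parameterized family of probability mass functions at the current parameter). Let f : α → ℝ. Then ∑_{ω : Fin N → α} ( ∏_{i : Fin N} p(ω i) ) · ( (1/N) · ∑_{i : Fin N} (p'(ω i)/p(ω i)) · ( f(ω i) − (1/(N−1)) · ∑_{j ≠ i} f(ω j) ) ) = ∑_{x ∈ α} p'(x) · f(x). That is, the leave-one-out score-function estimator with N i.i.d. samples and empirical baselines is unbiased for the derivative ∑_x p'(x)·f(x) of the expectation of f. -/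
/-!
Under the product weight `∏ i, p (ω i)` a function of one coordinate averages to its mean
under `p`, and a product of functions of two distinct coordinates averages to the product of
the means. The score `p' / p` has mean `∑ p' = 0`, so for `j ≠ i` the baseline term
`(p' / p)(ω i) · f (ω j)` averages to zero, while `(p' / p)(ω i) · f (ω i)` averages to
`∑ p' f`. Averaging over the `N` samples then gives the claim.
-/

open Finset

section Score

variable {α : Type*} [Fintype α] {p p' : α → ℝ}

theorem sum_mul_div_mul (hp_ne : ∀ x, p x ≠ 0) (g : α → ℝ) :
    ∑ x, p x * (p' x / p x * g x) = ∑ x, p' x * g x :=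
  sum_congr rfl fun x _ => by field_simp [hp_ne x]

theorem sum_mul_div (hp_ne : ∀ x, p x ≠ 0) : ∑ x, p x * (p' x / p x) = ∑ x, p' x := by
  simpa using sum_mul_div_mul (p' := p') hp_ne 1

end Score

section ProductWeight

variable {ι α : Type*} [Fintype ι] [DecidableEq ι] [Fintype α]

theorem sum_prod_mul_prod_eq_prod_sum (p : α → ℝ) (g : ι → α → ℝ) :
    ∑ ω : ι → α, (∏ i, p (ω i)) * ∏ i, g i (ω i) = ∏ i, ∑ x, p x * g i x := by
  simp_rw [← prod_mul_distrib]
  exact (Fintype.prod_sum fun i x => p x * g i x).symm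

variable {p : α → ℝ}

theorem sum_prod_mul_apply (hp : ∑ x, p x = 1) (i : ι) (h : α → ℝ) :
    ∑ ω : ι → α, (∏ k, p (ω k)) * h (ω i) = ∑ x, p x * h x := by
  let g : ι → α → ℝ := fun k x => if k = i then h x else 1
  have hg (ω : ι → α) : ∏ k, g k (ω k) = h (ω i) := by
    rw [Fintype.prod_eq_single i (fun k hk => by simp [g, hk])]
    simp [g]
  have hpg : ∏ k, ∑ x, p x * g k x = ∑ x, p x * h x := by
    rw [Fintype.prod_eq_single i (fun k hk => by simp [g, hk, hp])]
    simp [g]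
  simpa only [hg, hpg] using sum_prod_mul_prod_eq_prod_sum p g

theorem sum_prod_mul_apply_mul_apply (hp : ∑ x, p x = 1) {i j : ι} (hij : i ≠ j)
    (h k : α → ℝ) :
    ∑ ω : ι → α, (∏ l, p (ω l)) * (h (ω i) * k (ω j))
      = (∑ x, p x * h x) * ∑ x, p x * k x := by
  let g : ι → α → ℝ := fun l x => if l = i then h x else if l = j then k x else 1
  have hg (ω : ι → α) : ∏ l, g l (ω l) = h (ω i) * k (ω j) := by
    rw [Fintype.prod_eq_mul i j hij (by rintro l ⟨hli, hlj⟩; simp [g, hli, hlj])]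
    simp [g, hij.symm]
  have hpg : ∏ l, ∑ x, p x * g l x = (∑ x, p x * h x) * ∑ x, p x * k x := by
    rw [Fintype.prod_eq_mul i j hij (by rintro l ⟨hli, hlj⟩; simp [g, hli, hlj, hp])]
    simp [g, hij.symm]
  simpa only [hg, hpg] using sum_prod_mul_prod_eq_prod_sum p g

theorem sum_prod_mul_score_mul_sub_sum_erase {p' : α → ℝ} (hp_ne : ∀ x, p x ≠ 0)
    (hp : ∑ x, p x = 1) (hp' : ∑ x, p' x = 0) (f : α → ℝ) (c : ℝ) (i : ι) :
    ∑ ω : ι → α, (∏ k, p (ω k)) *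
        (p' (ω i) / p (ω i) * (f (ω i) - c * ∑ j ∈ univ.erase i, f (ω j)))
      = ∑ x, p' x * f x := by
  have hbaseline : ∀ j ∈ univ.erase i,
      ∑ ω : ι → α, (∏ k, p (ω k)) * (p' (ω i) / p (ω i) * f (ω j)) = 0 := by
    intro j hj
    rw [sum_prod_mul_apply_mul_apply hp (ne_of_mem_erase hj).symm (fun x => p' x / p x) f,
      sum_mul_div hp_ne, hp', zero_mul]
  calc _ = ∑ ω : ι → α, (∏ k, p (ω k)) * (p' (ω i) / p (ω i) * f (ω i))
        - c * ∑ j ∈ univ.erase i,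
          ∑ ω : ι → α, (∏ k, p (ω k)) * (p' (ω i) / p (ω i) * f (ω j)) := by
        simp_rw [mul_sub, mul_sum, sum_sub_distrib]
        rw [sum_comm (s := univ.erase i)]
        exact congrArg _ (sum_congr rfl fun _ _ => sum_congr rfl fun _ _ => by ring)
    _ = ∑ x, p' x * f x := by
        rw [sum_prod_mul_apply hp i fun x => p' x / p x * f x, sum_mul_div_mul hp_ne,
          sum_eq_zero hbaseline, mul_zero, sub_zero]

end ProductWeight

/-- **Unbiasedness of the leave-one-out score-function estimator.**
Let `p` be a strictly positive probability mass function on a finite type with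
pointwise parameter-derivative `p'` (so `∑ p' = 0`), and `f` an expectand.  Drawing
`N ≥ 2` i.i.d. samples and using, for each sample, the empirical mean of the other
`N − 1` samples as a baseline, yields an unbiased estimate of `∑_x p' x · f x`,
the derivative of the expectation of `f`. -/
theorem leave_one_out_unbiased {α : Type*} [Fintype α] (N : ℕ) (hN : 2 ≤ N)
    (p p' f : α → ℝ)
    (hp_pos : ∀ x, 0 < p x) (hp_sum : ∑ x, p x = 1) (hp'_sum : ∑ x, p' x = 0) :
    ∑ ω : Fin N → α, (∏ i, p (ω i)) *
        ((1 / (N : ℝ)) * ∑ i, (p' (ω i) / p (ω i)) *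
          (f (ω i) - (1 / ((N : ℝ) - 1)) * ∑ j ∈ univ.erase i, f (ω j)))
      = ∑ x, p' x * f x := by
  have hp_ne (x : α) : p x ≠ 0 := (hp_pos x).ne'
  have hN_ne : (N : ℝ) ≠ 0 := by exact_mod_cast (by omega : N ≠ 0)
  calc _ = 1 / (N : ℝ) * ∑ i, ∑ ω : Fin N → α, (∏ k, p (ω k)) *
          (p' (ω i) / p (ω i) * (f (ω i) - 1 / ((N : ℝ) - 1) * ∑ j ∈ univ.erase i, f (ω j))) := by
        simp_rw [mul_sum]
        rw [sum_comm]
        exact sum_congr rfl fun _ _ => sum_congr rfl fun _ _ => by ring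
    _ = 1 / (N : ℝ) * ∑ _i : Fin N, ∑ x, p' x * f x := by
        simp_rw [sum_prod_mul_score_mul_sub_sum_erase hp_ne hp_sum hp'_sum]
    _ = ∑ x, p' x * f x := by
        rw [sum_const, card_univ, Fintype.card_fin, nsmul_eq_mul]
        field_simp
end
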